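/- arXiv:1602.00182 — 2 statements merged into one kernel-verified Lean document; each statement's English description precedes it below -/
import Mathlib

section
/- With ε² chosen as ε² = (1/Δx²)·(−v̄_{i−1} + 2v̄_i − v̄_{i+1})/(−v̄_{i−1} + 5v̄_i + 2v̄_{i+1}), the Gaussian-RBF reconstruction p = (1/2 + (1/2)ε²Δx²)(v̄_i + v̄_{i+1}) satisfies p = v(x_{i+1/2}) + (1/12)v'''(x_{i+1/2})Δx³ + O(Δx⁴) for smooth v with v(x_{i+1/2}) ≠ 0. -/
/-!
Write `F u = ∫_x^u v`. Since `F` is `C⁵`, Taylor's theorem gives each cell average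
`(F (x + bΔx) - F (x + aΔx)) / Δx` as the cell average of the cubic Taylor polynomial of `v`
at `x`, up to `O(Δx⁴)`. For `Δx ≠ 0` the reconstruction equals
`(v̄ᵢ + v̄ᵢ₊₁)(-2v̄ᵢ₋₁ + 7v̄ᵢ + v̄ᵢ₊₁) / (2(-v̄ᵢ₋₁ + 5v̄ᵢ + 2v̄ᵢ₊₁))`, whose denominator tends to
`12 v(x) ≠ 0`. Substituting the polynomial averages into
`numerator - 2 (v(x) + v'''(x) Δx³ / 12) · denominator` leaves exactly
`-Δx⁴ (v''(x) - v'''(x) Δx / 2)² / 3`, so the error is `O(Δx⁴)`.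
-/

open Filter Asymptotics Topology Finset Set
open scoped Nat

section

variable {E : Type*} [NormedAddCommGroup E] [NormedSpace ℝ E]

theorem contDiff_primitive [CompleteSpace E] {v : ℝ → E} {n : ℕ} (hv : ContDiff ℝ n v) (a : ℝ) :
    ContDiff ℝ (n + 1) (fun u => ∫ t in a..u, v t) := by
  have hderiv : deriv (fun u => ∫ t in a..u, v t) = v :=
    funext (Continuous.deriv_integral v hv.continuous a)
  refine contDiff_succ_iff_deriv.2 ⟨fun b => ?_, by simp, by rwa [hderiv]⟩
  exact (hv.continuous.integral_hasStrictDerivAt a b).hasDerivAt.differentiableAt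

theorem iteratedDeriv_succ_primitive [CompleteSpace E] {v : ℝ → E} (hv : Continuous v) (a : ℝ)
    (k : ℕ) : iteratedDeriv (k + 1) (fun u => ∫ t in a..u, v t) = iteratedDeriv k v := by
  rw [iteratedDeriv_succ', funext (Continuous.deriv_integral v hv a)]

theorem taylorWithinEval_primitive [CompleteSpace E] {v : ℝ → E} (hv : Continuous v) (n : ℕ)
    (a y : ℝ) :
    taylorWithinEval (fun u => ∫ t in a..u, v t) n univ a y
      = ∑ k ∈ range n, (((k + 1)! : ℝ)⁻¹ * (y - a) ^ (k + 1)) • iteratedDeriv k v a := by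
  simp [taylor_within_apply, sum_range_succ', iteratedDerivWithin_univ,
    iteratedDeriv_succ_primitive hv]

theorem taylor_isBigO_univ {f : ℝ → E} {x₀ : ℝ} {n : ℕ} (hf : ContDiff ℝ (n + 1) f) :
    (fun x ↦ f x - taylorWithinEval f n univ x₀ x) =O[𝓝 x₀] fun x ↦ (x - x₀) ^ (n + 1) := by
  have hsucc := (taylor_isLittleO_univ (n := n + 1) (x₀ := x₀) (by exact_mod_cast hf)).isBigO
  have hterm : (fun x ↦ (((n + 1 : ℝ) * n !)⁻¹ * (x - x₀) ^ (n + 1)) •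
      iteratedDerivWithin (n + 1) f univ x₀) =O[𝓝 x₀] fun x ↦ (x - x₀) ^ (n + 1) := by
    simpa using ((isBigO_refl (fun x : ℝ => (x - x₀) ^ (n + 1)) (𝓝 x₀)).const_mul_left
      ((n + 1 : ℝ) * n !)⁻¹).smul (isBigO_const_one ℝ (iteratedDerivWithin (n + 1) f univ x₀) _)
  refine (hsucc.add hterm).congr_left fun x => ?_
  simp only [taylorWithinEval_succ]
  abel

theorem Asymptotics.IsBigO.comp_const_mul {F : Type*} [Norm F] {f : ℝ → F} {m : ℕ}
    (hf : f =O[𝓝 0] fun s => s ^ m) (c : ℝ) :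
    (fun h => f (c * h)) =O[𝓝 0] fun h => h ^ m := by
  have hc : Tendsto (fun h : ℝ => c * h) (𝓝 0) (𝓝 0) := by
    simpa using (continuous_const_mul c).tendsto 0
  refine (hf.comp_tendsto hc).trans ?_
  simp only [Function.comp_def, mul_pow]
  exact isBigO_const_mul_self _ _ _

/-- `(1 / h) ∫_{x + a h}^{x + b h} p`, where `p` is the Taylor polynomial of `v` at `x` of
degree `n - 1`. -/
noncomputable def taylorCellAverage (v : ℝ → E) (x a b : ℝ) (n : ℕ) (h : ℝ) : E :=
  ∑ k ∈ range n, ((b ^ (k + 1) - a ^ (k + 1)) / (k + 1)! * h ^ k) • iteratedDeriv k v x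

theorem cellAverage_sub_taylorCellAverage_isBigO [CompleteSpace E] {v : ℝ → E} {n : ℕ}
    (hv : ContDiff ℝ n v) (x a b : ℝ) :
    (fun h => (1 / h) • (∫ t in (x + a * h)..(x + b * h), v t) - taylorCellAverage v x a b n h)
      =O[𝓝[≠] 0] fun h => h ^ n := by
  set F := fun u => ∫ t in x..u, v t
  set G := fun s => F (x + s) - taylorWithinEval F n univ x (x + s)
  have hG : G =O[𝓝 0] fun s => s ^ (n + 1) := by
    have hx : Tendsto (fun s : ℝ => x + s) (𝓝 0) (𝓝 x) := by
      simpa using (continuous_const_add x).tendsto 0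
    simpa [Function.comp_def] using (taylor_isBigO_univ (contDiff_primitive hv x)).comp_tendsto hx
  have hdiff : (fun h => G (b * h) - G (a * h)) =O[𝓝[≠] 0] fun h => h ^ (n + 1) :=
    ((hG.comp_const_mul b).sub (hG.comp_const_mul a)).mono nhdsWithin_le_nhds
  refine ((isBigO_refl (fun h : ℝ => 1 / h) _).smul hdiff).congr' ?_ ?_
  · filter_upwards [self_mem_nhdsWithin] with h (hh : h ≠ 0)
    have hint : ∫ t in (x + a * h)..(x + b * h), v t = F (x + b * h) - F (x + a * h) :=
      (intervalIntegral.integral_interval_sub_left (hv.continuous.intervalIntegrable _ _)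
        (hv.continuous.intervalIntegrable _ _)).symm
    have htaylor : taylorWithinEval F n univ x (x + b * h) - taylorWithinEval F n univ x (x + a * h)
        = h • taylorCellAverage v x a b n h := by
      simp only [F, taylorWithinEval_primitive hv.continuous, taylorCellAverage, smul_sum,
        ← sum_sub_distrib, smul_smul, ← sub_smul, add_sub_cancel_left]
      refine sum_congr rfl fun k _ => ?_
      congr 1
      ring
    rw [← inv_smul_smul₀ hh (taylorCellAverage v x a b n h), ← htaylor, hint, one_div]
    simp only [G, smul_sub]
    abel
  · filter_upwards [self_mem_nhdsWithin] with h (hh : h ≠ 0)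
    rw [smul_eq_mul, _root_.pow_succ', ← mul_assoc, one_div_mul_cancel hh, one_mul]

theorem continuous_taylorCellAverage (v : ℝ → E) (x a b : ℝ) (n : ℕ) :
    Continuous (taylorCellAverage v x a b n) := by
  unfold taylorCellAverage
  fun_prop

theorem taylorCellAverage_zero (v : ℝ → E) (x a b : ℝ) (n : ℕ) :
    taylorCellAverage v x a b (n + 1) 0 = (b - a) • v x := by
  simp [taylorCellAverage, sum_range_succ']

theorem tendsto_of_isBigO_sub_taylorCellAverage {v w : ℝ → E} {x a b : ℝ} {n : ℕ}
    (hw : (fun h => w h - taylorCellAverage v x a b (n + 1) h) =O[𝓝[≠] 0] fun h => h ^ (n + 1)) :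
    Tendsto w (𝓝[≠] 0) (𝓝 ((b - a) • v x)) := by
  have hpoly : Tendsto (taylorCellAverage v x a b (n + 1)) (𝓝[≠] 0) (𝓝 ((b - a) • v x)) := by
    rw [← taylorCellAverage_zero]
    exact ((continuous_taylorCellAverage v x a b _).tendsto 0).mono_left nhdsWithin_le_nhds
  have hpow : Tendsto (fun h : ℝ => h ^ (n + 1)) (𝓝[≠] 0) (𝓝 0) := by
    simpa using ((continuous_pow (n + 1)).tendsto (0 : ℝ)).mono_left nhdsWithin_le_nhds
  simpa using (hw.trans_tendsto hpow).add hpoly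

end

/-- The paper's reconstruction `p` at `x_{i+1/2}` from the cell averages `v̄ᵢ₋₁, v̄ᵢ, v̄ᵢ₊₁`, with
the data-based shape parameter `ε²` substituted. -/
noncomputable def gaussianRBFReconstruction (vm1 v0 vp1 Δx : ℝ) : ℝ :=
  (1/2 + (1/2) * ((1 / Δx ^ 2) * ((-vm1 + 2*v0 - vp1) / (-vm1 + 5*v0 + 2*vp1))) * Δx ^ 2)
    * (v0 + vp1)

theorem gaussianRBFReconstruction_eq {vm1 v0 vp1 Δx : ℝ} (hΔx : Δx ≠ 0)
    (hD : -vm1 + 5*v0 + 2*vp1 ≠ 0) :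
    gaussianRBFReconstruction vm1 v0 vp1 Δx
      = (v0 + vp1) * (-2*vm1 + 7*v0 + vp1) / (2 * (-vm1 + 5*v0 + 2*vp1)) := by
  unfold gaussianRBFReconstruction
  generalize hN : -vm1 + 2*v0 - vp1 = N
  have hW : -2*vm1 + 7*v0 + vp1 = (-vm1 + 5*v0 + 2*vp1) + N := by rw [← hN]; ring
  rw [hW]
  generalize -vm1 + 5*v0 + 2*vp1 = D at hD ⊢
  field_simp

theorem taylorCellAverage_reconstruction_defect (v : ℝ → ℝ) (x h : ℝ) :
    (taylorCellAverage v x (-1) 0 4 h + taylorCellAverage v x 0 1 4 h)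
        * (-2 * taylorCellAverage v x (-2) (-1) 4 h + 7 * taylorCellAverage v x (-1) 0 4 h
          + taylorCellAverage v x 0 1 4 h)
      - 2 * (v x + (1/12) * iteratedDeriv 3 v x * h ^ 3)
        * (-taylorCellAverage v x (-2) (-1) 4 h + 5 * taylorCellAverage v x (-1) 0 4 h
          + 2 * taylorCellAverage v x 0 1 4 h)
      = h ^ 4 * (-(iteratedDeriv 2 v x - iteratedDeriv 3 v x * h / 2) ^ 2 / 3) := by
  simp only [taylorCellAverage, sum_range_succ, sum_range_zero, smul_eq_mul]
  norm_num [Nat.factorial]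
  ring

section

variable {v : ℝ → ℝ} {x : ℝ} {vm1 v0 vp1 : ℝ → ℝ}

theorem reconstruction_defect_isBigO
    (hm : (fun h => vm1 h - taylorCellAverage v x (-2) (-1) 4 h) =O[𝓝[≠] 0] fun h => h ^ 4)
    (h0 : (fun h => v0 h - taylorCellAverage v x (-1) 0 4 h) =O[𝓝[≠] 0] fun h => h ^ 4)
    (hp : (fun h => vp1 h - taylorCellAverage v x 0 1 4 h) =O[𝓝[≠] 0] fun h => h ^ 4) :
    (fun h => (v0 h + vp1 h) * (-2 * vm1 h + 7 * v0 h + vp1 h)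
      - 2 * (v x + (1/12) * iteratedDeriv 3 v x * h ^ 3) * (-vm1 h + 5 * v0 h + 2 * vp1 h))
      =O[𝓝[≠] 0] fun h => h ^ 4 := by
  have tm := tendsto_of_isBigO_sub_taylorCellAverage hm
  have t0 := tendsto_of_isBigO_sub_taylorCellAverage h0
  have tp := tendsto_of_isBigO_sub_taylorCellAverage hp
  norm_num at tm t0 tp
  have hbounded : ∀ {f : ℝ → ℝ}, Continuous f → f =O[𝓝[≠] 0] (1 : ℝ → ℝ) := fun hf =>
    ((hf.tendsto 0).mono_left nhdsWithin_le_nhds).isBigO_one ℝ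
  have hpoly : (fun h => h ^ 4 * (-(iteratedDeriv 2 v x - iteratedDeriv 3 v x * h / 2) ^ 2 / 3))
      =O[𝓝[≠] 0] fun h => h ^ 4 := by
    simpa using (isBigO_refl (fun h : ℝ => h ^ 4) _).mul (hbounded (by fun_prop))
  have hU := ((h0.add hp).mul ((((tm.const_mul (-2)).add (t0.const_mul 7)).add tp).isBigO_one ℝ))
    |>.congr_right fun _ => mul_one _
  have hW := (((hbounded (continuous_taylorCellAverage v x (-1) 0 4)).add
    (hbounded (continuous_taylorCellAverage v x 0 1 4))).mul
    (((hm.const_mul_left (-2)).add (h0.const_mul_left 7)).add hp)).congr_right fun _ => one_mul _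
  have hD := ((hbounded (by fun_prop : Continuous fun h : ℝ =>
      v x + (1/12) * iteratedDeriv 3 v x * h ^ 3)).mul
    ((hm.neg_left.add (h0.const_mul_left 5)).add (hp.const_mul_left 2))).congr_right
      fun _ => one_mul _
  refine (((hpoly.add hU).add hW).sub (hD.const_mul_left 2)).congr_left fun h => ?_
  linear_combination -taylorCellAverage_reconstruction_defect v x h

theorem gaussianRBFReconstruction_sub_isBigO (hvx : v x ≠ 0)
    (hm : (fun h => vm1 h - taylorCellAverage v x (-2) (-1) 4 h) =O[𝓝[≠] 0] fun h => h ^ 4)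
    (h0 : (fun h => v0 h - taylorCellAverage v x (-1) 0 4 h) =O[𝓝[≠] 0] fun h => h ^ 4)
    (hp : (fun h => vp1 h - taylorCellAverage v x 0 1 4 h) =O[𝓝[≠] 0] fun h => h ^ 4) :
    (fun h => gaussianRBFReconstruction (vm1 h) (v0 h) (vp1 h) h
        - (v x + (1/12) * iteratedDeriv 3 v x * h ^ 3)) =O[𝓝[≠] 0] fun h => h ^ 4 := by
  have tm := tendsto_of_isBigO_sub_taylorCellAverage hm
  have t0 := tendsto_of_isBigO_sub_taylorCellAverage h0
  have tp := tendsto_of_isBigO_sub_taylorCellAverage hp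
  norm_num at tm t0 tp
  have hD : Tendsto (fun h => -vm1 h + 5 * v0 h + 2 * vp1 h) (𝓝[≠] 0) (𝓝 (6 * v x)) := by
    convert (tm.neg.add (t0.const_mul 5)).add (tp.const_mul 2) using 2; ring
  have hD0 : 6 * v x ≠ 0 := mul_ne_zero (by norm_num) hvx
  have hDinv := ((hD.const_mul 2).inv₀ (mul_ne_zero two_ne_zero hD0)).isBigO_one ℝ
  refine (((reconstruction_defect_isBigO hm h0 hp).mul hDinv).congr_right fun _ => mul_one _)
    |>.congr' ?_ EventuallyEq.rfl
  filter_upwards [self_mem_nhdsWithin, hD.eventually_ne hD0] with h (hh : h ≠ 0) hDh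
  rw [gaussianRBFReconstruction_eq hh hDh]
  generalize -vm1 h + 5 * v0 h + 2 * vp1 h = D at hDh ⊢
  field_simp

end

/-- Third-order accuracy of the Gaussian-RBF reconstruction with the data-based shape parameter. -/
theorem stmt_5 (v : ℝ → ℝ) (hv : ContDiff ℝ 4 v) (x : ℝ) (hvx : v x ≠ 0) :
    (fun Δx : ℝ =>
        (let vm1 := (1/Δx) * ∫ t in (x - 2*Δx)..(x - Δx), v t
         let v0 := (1/Δx) * ∫ t in (x - Δx)..x, v t
         let vp1 := (1/Δx) * ∫ t in x..(x + Δx), v t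
         let e2 := (1 / Δx ^ 2) * ((-vm1 + 2*v0 - vp1) / (-vm1 + 5*v0 + 2*vp1))
         (1/2 + (1/2) * e2 * Δx ^ 2) * (v0 + vp1))
        - (v x + (1/12) * iteratedDeriv 3 v x * Δx ^ 3))
      =O[nhdsWithin 0 (Set.Ioi 0)] (fun Δx : ℝ => Δx ^ 4) := by
  have hm := cellAverage_sub_taylorCellAverage_isBigO (n := 4) hv x (-2) (-1)
  have h0 := cellAverage_sub_taylorCellAverage_isBigO (n := 4) hv x (-1) 0
  have hp := cellAverage_sub_taylorCellAverage_isBigO (n := 4) hv x 0 1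
  simp only [smul_eq_mul, neg_mul, one_mul, zero_mul, add_zero, ← sub_eq_add_neg] at hm h0 hp
  exact (gaussianRBFReconstruction_sub_isBigO hvx hm h0 hp).mono
    (nhdsWithin_mono _ fun _ h => h.ne')
end

section
/- Choosing ε² so that the exact MQ coefficient relation ε² = −(1/3)v''(x_{i+1/2})/v(x_{i+1/2}) holds (with v(x_{i+1/2}) ≠ 0), the exact MQ-RBF reconstruction v⁻_{i+1/2} = c(ε)(v̄_i + v̄_{i+1}) with c(ε) = (√(4ε²Δx²+1)+1)/(4√(ε²Δx²+1)) satisfies v⁻_{i+1/2} = v(x_{i+1/2}) + O(Δx⁴). -/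
/-!
Write `u = ε²Δx²` and `V(y) = ∫ₓʸ v`. The two cell averages add up to
`(V(x + Δx) - V(x - Δx)) / Δx`, an even function of `Δx` whose Taylor expansion is
`2 v(x) + v''(x) Δx² / 3 + O(Δx⁴)`, while `c = 1/2 + u/4 + O(u²)`. In the product the `Δx²`
coefficient is `v''(x)/6 + ε² v(x)/2`, which the choice of `ε²` makes vanish.
-/

open Filter Asymptotics Topology Set

theorem ContDiffAt.isBigO_sub_taylorWithinEval {E : Type*} [NormedAddCommGroup E]
    [NormedSpace ℝ E] {f : ℝ → E} {x₀ : ℝ} {n : ℕ} (hf : ContDiffAt ℝ (n + 1) f x₀) :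
    (fun x => f x - taylorWithinEval f n univ x₀ x) =O[𝓝 x₀] fun x => (x - x₀) ^ (n + 1) := by
  obtain ⟨u, hu, hfu⟩ := hf.contDiffOn le_rfl (by simp)
  obtain ⟨r, hr, hball⟩ := Metric.mem_nhds_iff.mp hu
  have hT : taylorWithinEval f (n + 1) (Metric.ball x₀ r) x₀ =
      taylorWithinEval f (n + 1) univ x₀ := by
    funext x
    simp only [taylorWithinEval, taylorWithin, taylorCoeffWithin, iteratedDerivWithin_univ,
      iteratedDerivWithin_of_isOpen Metric.isOpen_ball (Metric.mem_ball_self hr)]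
  have hlittle := taylor_isLittleO (convex_ball x₀ r) (Metric.mem_ball_self hr)
    (by exact_mod_cast hfu.mono hball)
  rw [nhdsWithin_eq_nhds.mpr (Metric.ball_mem_nhds x₀ hr), hT] at hlittle
  have hlast : (fun x => taylorWithinEval f (n + 1) univ x₀ x - taylorWithinEval f n univ x₀ x)
      =O[𝓝 x₀] fun x => (x - x₀) ^ (n + 1) := by
    simp only [taylorWithinEval_succ, add_sub_cancel_left]
    refine IsBigO.of_bound
      (|((n + 1 : ℝ) * n.factorial)⁻¹| * ‖iteratedDerivWithin (n + 1) f univ x₀‖)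
      (Eventually.of_forall fun x => le_of_eq ?_)
    rw [norm_smul, norm_mul, Real.norm_eq_abs, Real.norm_eq_abs]
    ring
  exact (hlittle.isBigO.add hlast).congr_left fun x => by abel

section Antiderivative

variable {E : Type*} [NormedAddCommGroup E] [NormedSpace ℝ E] [CompleteSpace E] {f : ℝ → E}

theorem contDiff_integral_right {n : ℕ} (hf : ContDiff ℝ n f) (a : ℝ) :
    ContDiff ℝ (n + 1) fun y => ∫ t in a..y, f t := by
  rw [contDiff_succ_iff_deriv]
  refine ⟨fun y => (hf.continuous.integral_hasStrictDerivAt a y).hasDerivAt.differentiableAt,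
    by simp, ?_⟩
  rwa [funext (hf.continuous.deriv_integral f a)]

theorem iteratedDeriv_succ_integral_right (hf : Continuous f) (a : ℝ) (k : ℕ) :
    iteratedDeriv (k + 1) (fun y => ∫ t in a..y, f t) = iteratedDeriv k f := by
  rw [iteratedDeriv_succ', funext (hf.deriv_integral f a)]

end Antiderivative

section CellAverages

variable {v : ℝ → ℝ}

theorem integral_centered_sub_isBigO (hv : ContDiff ℝ 4 v) (x : ℝ) :
    (fun s => (∫ t in (x - s)..(x + s), v t) - (2 * v x * s + iteratedDeriv 2 v x / 3 * s ^ 3))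
      =O[𝓝 0] fun s => s ^ 5 := by
  have hT := (contDiff_integral_right hv x).contDiffAt.isBigO_sub_taylorWithinEval (x₀ := x)
  have hplus := (hT.comp_tendsto ((by fun_prop : Continuous fun s : ℝ => x + s).tendsto' 0 x
    (by simp))).congr_right (g₂ := fun s => s ^ 5) fun s => by simp
  have hminus := isBigO_neg_right.mp <| (hT.comp_tendsto
    ((by fun_prop : Continuous fun s : ℝ => x - s).tendsto' 0 x (by simp))).congr_right
    (g₂ := fun s => -s ^ 5) fun s => by simp only [Function.comp_apply]; ring
  refine (hplus.sub hminus).congr_left fun s => ?_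
  rw [← intervalIntegral.integral_interval_sub_left (hv.continuous.intervalIntegrable x (x + s))
    (hv.continuous.intervalIntegrable x (x - s))]
  simp only [Function.comp_apply, add_sub_cancel_left, sub_sub_cancel_left, taylorWithinEval_succ,
    taylor_within_zero_eval, iteratedDerivWithin_univ,
    iteratedDeriv_succ_integral_right hv.continuous, iteratedDeriv_zero, iteratedDeriv_one,
    intervalIntegral.integral_same, smul_eq_mul]
  push_cast [Nat.factorial]
  ring

theorem cellAverages_add_sub_isBigO (hv : ContDiff ℝ 4 v) (x : ℝ) :
    (fun Δ => ((1 / Δ) * ∫ t in (x - Δ)..x, v t) + ((1 / Δ) * ∫ t in x..(x + Δ), v t)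
      - (2 * v x + iteratedDeriv 2 v x / 3 * Δ ^ 2)) =O[𝓝[≠] 0] fun Δ => Δ ^ 4 := by
  refine ((isBigO_refl (fun Δ : ℝ => 1 / Δ) (𝓝[≠] 0)).mul
    ((integral_centered_sub_isBigO hv x).mono nhdsWithin_le_nhds)).congr' ?_ ?_
  · filter_upwards [self_mem_nhdsWithin] with Δ (hΔ : Δ ≠ 0)
    rw [← mul_add, intervalIntegral.integral_add_adjacent_intervals
      (hv.continuous.intervalIntegrable _ _) (hv.continuous.intervalIntegrable _ _)]
    field_simp
  · filter_upwards [self_mem_nhdsWithin] with Δ (hΔ : Δ ≠ 0)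
    field_simp

end CellAverages

/-- The MQ-RBF reconstruction coefficient `c(ε)` as a function of `u = ε²Δx²`. -/
noncomputable def mqCoeff (u : ℝ) : ℝ := (√(4 * u + 1) + 1) / (4 * √(u + 1))

theorem contDiffAt_mqCoeff {n : WithTop ℕ∞} {u : ℝ} (hu : -(1 / 4) < u) :
    ContDiffAt ℝ n mqCoeff u := by
  have h4 : 4 * u + 1 ≠ 0 := by linarith
  have h1 : 0 < u + 1 := by linarith
  refine ContDiffAt.div ?_ ?_ (by positivity)
  · exact (contDiffAt_id.const_smul (4 : ℝ) |>.add contDiffAt_const |>.sqrt h4).add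
      contDiffAt_const
  · exact contDiffAt_const.mul ((contDiffAt_id.add contDiffAt_const).sqrt h1.ne')

theorem hasDerivAt_mqCoeff_zero : HasDerivAt mqCoeff (1 / 4) 0 := by
  have hnum : HasDerivAt (fun u : ℝ => √(4 * u + 1) + 1) 2 0 :=
    ((((hasDerivAt_id (0 : ℝ)).const_mul 4).add_const 1).sqrt (by norm_num)).add_const 1
      |>.congr_deriv (by norm_num)
  have hden : HasDerivAt (fun u : ℝ => 4 * √(u + 1)) 2 0 :=
    (((hasDerivAt_id (0 : ℝ)).add_const 1).sqrt (by norm_num)).const_mul 4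
      |>.congr_deriv (by norm_num)
  exact (hnum.div hden (by norm_num)).congr_deriv (by norm_num)

theorem mqCoeff_sub_isBigO : (fun u => mqCoeff u - (1 / 2 + u / 4)) =O[𝓝 0] fun u => u ^ 2 := by
  refine (ContDiffAt.isBigO_sub_taylorWithinEval (n := 1)
    (contDiffAt_mqCoeff (u := 0) (by norm_num))).congr (fun u => ?_) (fun u => by simp)
  simp only [taylorWithinEval_succ, taylor_within_zero_eval, zero_add, iteratedDerivWithin_univ,
    iteratedDeriv_one, hasDerivAt_mqCoeff_zero.deriv, smul_eq_mul, mqCoeff]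
  norm_num
  ring

theorem mqCoeff_mul_sq_sub_isBigO (e : ℝ) :
    (fun Δ => mqCoeff (e * Δ ^ 2) - (1 / 2 + e / 4 * Δ ^ 2)) =O[𝓝 0] fun Δ => Δ ^ 4 := by
  have hu : Tendsto (fun Δ : ℝ => e * Δ ^ 2) (𝓝 0) (𝓝 0) :=
    (by fun_prop : Continuous fun Δ : ℝ => e * Δ ^ 2).tendsto' 0 0 (by simp)
  refine ((mqCoeff_sub_isBigO.comp_tendsto hu).congr (fun Δ => by simp only [Function.comp]; ring)
    (g₂ := fun Δ => e ^ 2 * Δ ^ 4) fun Δ => by simp only [Function.comp]; ring).trans ?_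
  exact (isBigO_refl _ _).const_mul_left _

/-- Fourth-order accuracy of the exact MQ-RBF reconstruction with the optimal shape parameter. -/
theorem stmt_8 (v : ℝ → ℝ) (hv : ContDiff ℝ 6 v) (x : ℝ) (hvx : v x ≠ 0)
    (e2 : ℝ) (he2 : e2 = -(1/3) * iteratedDeriv 2 v x / v x) :
    (fun Δx : ℝ =>
        ((Real.sqrt (4 * e2 * Δx ^ 2 + 1) + 1) / (4 * Real.sqrt (e2 * Δx ^ 2 + 1)))
          * (((1/Δx) * ∫ t in (x - Δx)..x, v t) + ((1/Δx) * ∫ t in x..(x + Δx), v t))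
        - v x)
      =O[nhdsWithin 0 (Set.Ioi 0)] (fun Δx : ℝ => Δx ^ 4) := by
  set a := iteratedDeriv 2 v x
  have hcancel : e2 * v x = -(a / 3) := by rw [he2]; field_simp
  have hl : 𝓝[>] (0 : ℝ) ≤ 𝓝[≠] 0 := nhdsWithin_mono _ fun _ h => ne_of_gt h
  have hc : (fun Δ : ℝ => mqCoeff (e2 * Δ ^ 2)) =O[𝓝[>] 0] fun _ => (1 : ℝ) :=
    ((contDiffAt_mqCoeff (n := 0) (u := 0) (by norm_num)).continuousAt.comp_of_eq
      (by fun_prop : Continuous fun Δ : ℝ => e2 * Δ ^ 2).continuousAt (by simp)).isBigO_one ℝ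
      |>.mono nhdsWithin_le_nhds
  have hP : (fun Δ : ℝ => 2 * v x + a / 3 * Δ ^ 2) =O[𝓝[>] 0] fun _ => (1 : ℝ) :=
    (by fun_prop : Continuous fun Δ : ℝ => 2 * v x + a / 3 * Δ ^ 2).continuousAt.isBigO_one ℝ
      |>.mono nhdsWithin_le_nhds
  have hA := (cellAverages_add_sub_isBigO (hv.of_le (by norm_num)) x).mono hl
  have hcoef := (mqCoeff_mul_sq_sub_isBigO e2).mono (nhdsWithin_le_nhds (s := Ioi 0))
  -- `c A - v = c (A - P) + (c - 1/2 - ε²Δx²/4) P + ε² v''(x) Δx⁴ / 12`, using `ε² v(x) = -v''(x)/3`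
  refine ((((hc.mul hA).congr_right fun _ => one_mul _).add
    ((hcoef.mul hP).congr_right fun _ => mul_one _)).add
    ((isBigO_refl (fun Δ : ℝ => Δ ^ 4) _).const_mul_left (e2 * a / 12))).congr
    (fun Δ => ?_) (fun Δ => by simp)
  simp only [mqCoeff, mul_assoc]
  linear_combination (-(Δ ^ 2) / 2) * hcancel
end
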